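/- arXiv:2104.08960 — 2 statements merged into one kernel-verified Lean document; each statement's English description precedes it below -/
import Mathlib

section
/- Let M be a 2×2 real matrix, B a nonzero vector in ℝ², and r a real number. Then det[B | e^{rM}B] ≠ 0 if and only if rank[B | MB] = 2 and, additionally: if M has two real eigenvalues or a single (repeated) eigenvalue then r ≠ 0, while if M has two complex conjugate non-real eigenvalues λ, λ̄ then r ∉ (π/Im(λ))·ℤ. -/
/-!
Write `M = s + N` with `s = tr M / 2`; by Cayley–Hamilton `N² = c` for the scalar
`c = s² - det M`, so `exp (r M) = e^{rs} (C r + S r • N)` where `C' = c S`, `S' = C`,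
`C 0 = 1`, `S 0 = 0`. According to the sign of `c`, `S r` is `sinh (√c r) / √c`, `r`, or
`sin (√(-c) r) / √(-c)`. Hence `det [B | e^{rM} B] = e^{rs} S r · det [B | M B]`, and `S r`
vanishes exactly when `r = 0` (for `c ≥ 0`, real spectrum) or `r ∈ (π / √(-c)) ℤ` (for `c < 0`,
eigenvalues `s ± i √(-c)`).
-/

open Matrix Real

namespace NormedSpace

variable {A : Type*} [NormedRing A] [NormedAlgebra ℝ A] [CompleteSpace A]

theorem exp_smul_one_add (a : ℝ) (y : A) : exp (a • (1 : A) + y) = Real.exp a • exp y := by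
  have hball : ∀ z : A, z ∈ Metric.eball (0 : A) (expSeries ℝ A).radius := fun z =>
    (expSeries_radius_eq_top ℝ A).symm ▸ edist_lt_top _ _
  rw [← Algebra.algebraMap_eq_smul_one,
    exp_add_of_commute_of_mem_ball (Algebra.commutes a y) (hball _) (hball _),
    ← algebraMap_exp_comm, ← Real.exp_eq_exp_ℝ, Algebra.smul_def]

theorem exp_smul_eq_of_mul_self_eq {y : A} {c : ℝ} (hy : y * y = c • 1) {C S : ℝ → ℝ}
    (hC : ∀ u, HasDerivAt C (c * S u) u) (hS : ∀ u, HasDerivAt S (C u) u)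
    (hC0 : C 0 = 1) (hS0 : S 0 = 0) (r : ℝ) :
    exp (r • y) = C r • 1 + S r • y := by
  set G : ℝ → A := fun u => C u • 1 + S u • y
  have hG : ∀ u, HasDerivAt G (y * G u) u := by
    intro u
    refine (((hC u).smul_const (1 : A)).add ((hS u).smul_const y)).congr_deriv ?_
    simp only [G, mul_add, mul_smul_comm, mul_one, hy, smul_smul]
    rw [add_comm, mul_comm]
  -- `G' = y G`, so `u ↦ exp ((r - u) • y) * G u` is constant; compare its values at `0` and `r`.
  set F : ℝ → A := fun u => exp ((r - u) • y) * G u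
  have hF : ∀ u, HasDerivAt F 0 u := by
    intro u
    have hE : HasDerivAt (fun u : ℝ => exp ((r - u) • y)) (-(exp ((r - u) • y) * y)) u := by
      simpa [Function.comp_def] using (hasDerivAt_exp_smul_const (𝕂 := ℝ) y (r - u)).scomp u
        ((hasDerivAt_id u).const_sub r)
    refine (hE.mul (hG u)).congr_deriv ?_
    rw [neg_mul, mul_assoc, neg_add_cancel]
  have := is_const_of_deriv_eq_zero (fun u => (hF u).differentiableAt) (fun u => (hF u).deriv) 0 r
  simpa [F, G, hC0, hS0, exp_zero] using this

theorem exp_smul_eq_cosh_sinh {y : A} {ω : ℝ} (hω : ω ≠ 0) (hy : y * y = ω ^ 2 • 1) (r : ℝ) :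
    exp (r • y) = Real.cosh (ω * r) • 1 + (Real.sinh (ω * r) / ω) • y := by
  refine exp_smul_eq_of_mul_self_eq hy (C := fun u => Real.cosh (ω * u))
    (S := fun u => Real.sinh (ω * u) / ω) (fun u => ?_) (fun u => ?_) (by simp) (by simp) r
  · refine (((hasDerivAt_id' u).const_mul ω).cosh.congr_deriv ?_)
    field_simp
  · refine (((hasDerivAt_id' u).const_mul ω).sinh.div_const ω).congr_deriv ?_
    field_simp

theorem exp_smul_eq_cos_sin {y : A} {ω : ℝ} (hω : ω ≠ 0) (hy : y * y = (-ω ^ 2) • 1) (r : ℝ) :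
    exp (r • y) = Real.cos (ω * r) • 1 + (Real.sin (ω * r) / ω) • y := by
  refine exp_smul_eq_of_mul_self_eq hy (C := fun u => Real.cos (ω * u))
    (S := fun u => Real.sin (ω * u) / ω) (fun u => ?_) (fun u => ?_) (by simp) (by simp) r
  · refine (((hasDerivAt_id' u).const_mul ω).cos.congr_deriv ?_)
    field_simp
  · refine (((hasDerivAt_id' u).const_mul ω).sin.div_const ω).congr_deriv ?_
    field_simp

theorem exp_smul_eq_one_add {y : A} (hy : y * y = 0) (r : ℝ) : exp (r • y) = 1 + r • y := by
  simpa using exp_smul_eq_of_mul_self_eq (hy.trans (zero_smul ℝ 1).symm) (C := fun _ => 1)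
    (S := id) (fun u => by simpa using hasDerivAt_const u 1) hasDerivAt_id rfl rfl r

theorem exp_smul_eq_of_exp_smul_sub_eq {x : A} {s C S r : ℝ}
    (h : exp (r • (x - s • 1)) = C • 1 + S • (x - s • 1)) :
    exp (r • x) = (Real.exp (r * s) * (C - s * S)) • 1 + (Real.exp (r * s) * S) • x := by
  rw [show r • x = (r * s) • (1 : A) + r • (x - s • 1) by module, exp_smul_one_add, h]
  module

end NormedSpace

namespace Matrix

theorem sub_smul_one_mul_self_fin_two {K : Type*} [Field K] [CharZero K]
    (M : Matrix (Fin 2) (Fin 2) K) :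
    (M - (M.trace / 2) • 1) * (M - (M.trace / 2) • 1) = ((M.trace / 2) ^ 2 - M.det) • 1 := by
  ext i j
  fin_cases i <;> fin_cases j <;>
    simp [mul_apply, Fin.sum_univ_two, trace_fin_two, det_fin_two] <;> ring

theorem rank_eq_card_iff_det_ne_zero {n K : Type*} [Fintype n] [DecidableEq n] [Field K]
    (A : Matrix n n K) : A.rank = Fintype.card n ↔ A.det ≠ 0 := by
  refine ⟨fun h => ?_, rank_of_det_ne_zero⟩
  have hrange : LinearMap.range A.mulVecLin = ⊤ :=
    Submodule.eq_top_of_finrank_eq (by rw [← rank, h, Module.finrank_fintype_fun_eq_card])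
  rw [← isUnit_iff_ne_zero, ← isUnit_iff_isUnit_det, ← mulVec_surjective_iff_isUnit]
  exact LinearMap.range_eq_top.1 hrange

theorem det_transpose_of_smul_add_smul {K : Type*} [CommRing K] (B v : Fin 2 → K) (a b : K) :
    (of ![B, a • B + b • v])ᵀ.det = b * (of ![B, v])ᵀ.det := by
  simp [det_fin_two]
  ring

-- `r` is a nonzero sampling period that is non-pathological for `M` in the sense of
-- Kalman, Ho and Narendra.
def IsNonpathologicalPeriod (M : Matrix (Fin 2) (Fin 2) ℝ) (r : ℝ) : Prop :=
  ((∀ lam ∈ (M.map (Complex.ofReal)).charpoly.roots, lam.im = 0) → r ≠ 0) ∧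
    (∀ lam ∈ (M.map (Complex.ofReal)).charpoly.roots, lam.im ≠ 0 →
      ∀ k : ℤ, r ≠ (π / lam.im) * k)

variable (M : Matrix (Fin 2) (Fin 2) ℝ)

theorem mem_roots_charpoly_map_ofReal_iff (z : ℂ) :
    z ∈ (M.map Complex.ofReal).charpoly.roots ↔
      (z - (M.trace / 2 : ℝ)) ^ 2 = ((M.trace / 2) ^ 2 - M.det : ℝ) := by
  rw [Polynomial.mem_roots (charpoly_monic _).ne_zero, Polynomial.IsRoot, charpoly_fin_two]
  simp [trace_fin_two, det_fin_two]
  constructor <;> intro h <;> linear_combination h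

theorem im_eq_zero_of_mem_roots_charpoly (h : M.det ≤ (M.trace / 2) ^ 2) {z : ℂ}
    (hz : z ∈ (M.map Complex.ofReal).charpoly.roots) : z.im = 0 := by
  rw [mem_roots_charpoly_map_ofReal_iff] at hz
  have hre := congrArg Complex.re hz
  have him := congrArg Complex.im hz
  simp only [sq, Complex.mul_re, Complex.mul_im, Complex.sub_re, Complex.sub_im,
    Complex.ofReal_re, Complex.ofReal_im, sub_zero] at hre him
  by_contra hne
  have hre_eq : z.re - M.trace / 2 = 0 := by
    have : z.im * (2 * (z.re - M.trace / 2)) = 0 := by linarith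
    simpa [hne] using this
  rw [hre_eq] at hre
  nlinarith [mul_self_pos.2 hne]

theorem mem_roots_charpoly_iff_of_lt_det {ω : ℝ} (hω : ω ^ 2 = M.det - (M.trace / 2) ^ 2)
    (z : ℂ) : z ∈ (M.map Complex.ofReal).charpoly.roots ↔
      z = (M.trace / 2 : ℝ) + ω * Complex.I ∨ z = (M.trace / 2 : ℝ) - ω * Complex.I := by
  have hfactor : (z - (M.trace / 2 : ℝ)) ^ 2 - ((M.trace / 2) ^ 2 - M.det : ℝ) =
      (z - ((M.trace / 2 : ℝ) + ω * Complex.I)) * (z - ((M.trace / 2 : ℝ) - ω * Complex.I)) := by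
    have : ((ω ^ 2 : ℝ) : ℂ) = ((M.det - (M.trace / 2) ^ 2 : ℝ) : ℂ) := by rw [hω]
    push_cast at this ⊢
    linear_combination (-1 : ℂ) * this + (ω : ℂ) ^ 2 * Complex.I_sq
  rw [mem_roots_charpoly_map_ofReal_iff, ← sub_eq_zero, hfactor, mul_eq_zero, sub_eq_zero,
    sub_eq_zero]

variable {M}

theorem isNonpathologicalPeriod_iff_of_det_le (h : M.det ≤ (M.trace / 2) ^ 2) (r : ℝ) :
    IsNonpathologicalPeriod M r ↔ r ≠ 0 := by
  have hreal := fun z hz => im_eq_zero_of_mem_roots_charpoly M h (z := z) hz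
  exact ⟨fun hM => hM.1 hreal, fun hr => ⟨fun _ => hr, fun z hz him => absurd (hreal z hz) him⟩⟩

theorem isNonpathologicalPeriod_iff_of_lt_det {ω : ℝ} (hω₀ : 0 < ω)
    (hω : ω ^ 2 = M.det - (M.trace / 2) ^ 2) (r : ℝ) :
    IsNonpathologicalPeriod M r ↔ Real.sin (ω * r) ≠ 0 := by
  have hsin : Real.sin (ω * r) = 0 ↔ ∃ k : ℤ, r = π / ω * k := by
    rw [Real.sin_eq_zero_iff]
    refine exists_congr fun k => ⟨fun h => ?_, fun h => ?_⟩
    · field_simp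
      linarith
    · rw [h]
      field_simp
  simp only [IsNonpathologicalPeriod, mem_roots_charpoly_iff_of_lt_det M hω, forall_eq_or_imp,
    forall_eq, Complex.add_im, Complex.sub_im, Complex.ofReal_im, Complex.mul_im,
    Complex.ofReal_re, Complex.I_im, Complex.I_re, mul_one, mul_zero, add_zero, zero_add,
    zero_sub, neg_eq_zero, div_neg, hω₀.ne', false_and, false_implies, true_and, ne_eq,
    not_false_eq_true, true_implies, hsin, not_exists]
  -- the conjugate root `s - ω i` gives the same condition, with `k` replaced by `-k`
  refine ⟨fun h => h.1, fun h => ⟨h, fun k hk => h (-k) ?_⟩⟩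
  rw [hk]
  push_cast
  ring

theorem exists_exp_smul_eq_and_ne_zero_iff (M : Matrix (Fin 2) (Fin 2) ℝ) (r : ℝ) :
    ∃ a b : ℝ, NormedSpace.exp (r • M) = a • 1 + b • M ∧
      (b ≠ 0 ↔ IsNonpathologicalPeriod M r) := by
  -- `exp` does not depend on the norm; any Banach algebra norm makes the lemmas above apply.
  let : NormedRing (Matrix (Fin 2) (Fin 2) ℝ) := Matrix.linftyOpNormedRing
  let : NormedAlgebra ℝ (Matrix (Fin 2) (Fin 2) ℝ) := Matrix.linftyOpNormedAlgebra
  have hN := M.sub_smul_one_mul_self_fin_two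
  have hshift := fun C S => NormedSpace.exp_smul_eq_of_exp_smul_sub_eq (x := M)
    (s := M.trace / 2) (C := C) (S := S) (r := r)
  set s := M.trace / 2
  rcases lt_trichotomy M.det (s ^ 2) with hlt | heq | hgt
  · have hc : 0 < s ^ 2 - M.det := sub_pos.2 hlt
    have hω : 0 < √(s ^ 2 - M.det) := sqrt_pos.2 hc
    refine ⟨_, _, hshift _ _ (NormedSpace.exp_smul_eq_cosh_sinh hω.ne'
      (by rw [sq_sqrt hc.le]; exact hN) r), ?_⟩
    rw [isNonpathologicalPeriod_iff_of_det_le hlt.le]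
    simp [hω.ne']
  · have hnil : (M - s • 1) * (M - s • 1) = 0 := by rw [hN, heq, sub_self, zero_smul]
    refine ⟨_, _, hshift 1 r (by rw [one_smul]; exact NormedSpace.exp_smul_eq_one_add hnil r), ?_⟩
    rw [isNonpathologicalPeriod_iff_of_det_le heq.le]
    simp
  · have hc : 0 < M.det - s ^ 2 := sub_pos.2 hgt
    have hω : 0 < √(M.det - s ^ 2) := sqrt_pos.2 hc
    refine ⟨_, _, hshift _ _ (NormedSpace.exp_smul_eq_cos_sin hω.ne'
      (by rw [sq_sqrt hc.le, neg_sub]; exact hN) r), ?_⟩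
    rw [isNonpathologicalPeriod_iff_of_lt_det hω (sq_sqrt hc.le)]
    simp [hω.ne']

end Matrix

theorem stmt0_general (M : Matrix (Fin 2) (Fin 2) ℝ) (B : Fin 2 → ℝ) (r : ℝ) :
    ((Matrix.of ![B, (NormedSpace.exp (r • M)).mulVec B])ᵀ).det ≠ 0 ↔
      ((Matrix.of ![B, M.mulVec B])ᵀ).rank = 2 ∧
      ((∀ lam ∈ (M.map (Complex.ofReal)).charpoly.roots, lam.im = 0) → r ≠ 0) ∧
      (∀ lam ∈ (M.map (Complex.ofReal)).charpoly.roots, lam.im ≠ 0 →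
        ∀ k : ℤ, r ≠ (π / lam.im) * k) := by
  obtain ⟨a, b, hexp, hb⟩ := exists_exp_smul_eq_and_ne_zero_iff M r
  have hrank : (of ![B, M *ᵥ B])ᵀ.rank = 2 ↔ (of ![B, M *ᵥ B])ᵀ.det ≠ 0 := by
    simpa using rank_eq_card_iff_det_ne_zero (of ![B, M *ᵥ B])ᵀ
  rw [hrank, hexp, add_mulVec, smul_mulVec, smul_mulVec, one_mulVec,
    det_transpose_of_smul_add_smul, mul_ne_zero_iff, hb, IsNonpathologicalPeriod, and_comm]

/-- For a 2×2 real matrix `M`, a nonzero vector `B ∈ ℝ²` and `r ∈ ℝ`,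
`det [B | e^{rM}B] ≠ 0` iff `rank [B | MB] = 2` together with: `r ≠ 0` when all complex
eigenvalues of `M` are real (two real eigenvalues or one repeated eigenvalue), and
`r ∉ (π / Im λ)·ℤ` for the non-real eigenvalues `λ` otherwise. -/
theorem stmt0 (M : Matrix (Fin 2) (Fin 2) ℝ) (B : Fin 2 → ℝ) (hB : B ≠ 0) (r : ℝ) :
    ((Matrix.of ![B, (NormedSpace.exp (r • M)).mulVec B])ᵀ).det ≠ 0 ↔
      ((Matrix.of ![B, M.mulVec B])ᵀ).rank = 2 ∧
      ((∀ lam ∈ (M.map (Complex.ofReal)).charpoly.roots, lam.im = 0) → r ≠ 0) ∧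
      (∀ lam ∈ (M.map (Complex.ofReal)).charpoly.roots, lam.im ≠ 0 →
        ∀ k : ℤ, r ≠ (π / lam.im) * k) :=
  stmt0_general M B r
end

section
/- Let k < n and let M : [0,1] → M_{n×k}(ℝ) be continuous, with associated multiplication operator 𝕄 : L²(0,1)ᵏ → L²(0,1)ⁿ, (𝕄h)(x) = M(x)h(x). Then the following are equivalent: (1) there exists C > 0 with ‖h‖_{L²(0,1)ᵏ} ≤ C‖𝕄h‖_{L²(0,1)ⁿ} for all h ∈ L²(0,1)ᵏ; (2) for every x ∈ [0,1] there exists a k×k submatrix M_ext of M (formed by choosing k of the n rows) with det M_ext(x) ≠ 0. -/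
/-!
If every `M x` is injective, compactness of `[0,1]` times the unit sphere gives a uniform bound
`‖v‖ ≤ C ‖M x v‖`; applied to `v = h x` for a.e. `x` it yields `‖h‖ ≤ C ‖𝕄 h‖`. Conversely, if
`M x₀ v = 0` with `v ≠ 0`, then `‖M x v‖ ≤ ε ‖v‖` on a neighbourhood `s` of `x₀` in `[0,1]`,
which has positive measure, and the test function `1_s v` forces the coercivity constant to be
at least `1/ε`. Finally, an `n × k` matrix is injective iff some `k` of its rows span `ℝᵏ`,
i.e. iff some `k × k` row submatrix is invertible.
-/

open Matrix MeasureTheory Topology ENNReal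

namespace Matrix

variable {m n K : Type*} [Fintype n] [DecidableEq n] [Field K]

theorem mulVec_injective_of_det_submatrix_ne_zero {A : Matrix m n K} {rows : n → m}
    (h : (A.submatrix rows id).det ≠ 0) : Function.Injective A.mulVec := by
  have hsub : Function.Injective (A.submatrix rows id).mulVec :=
    mulVec_injective_iff_isUnit.mpr ((isUnit_iff_isUnit_det _).mpr h.isUnit)
  have hrestrict : ∀ v, (A.submatrix rows id) *ᵥ v = (A *ᵥ v) ∘ rows := fun _ => rfl
  exact fun v w hvw => hsub (by rw [hrestrict, hrestrict, hvw])

theorem exists_injective_det_submatrix_ne_zero [Fintype m] {A : Matrix m n K}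
    (hA : Function.Injective A.mulVec) :
    ∃ rows : n → m, Function.Injective rows ∧ (A.submatrix rows id).det ≠ 0 := by
  have hspan : Submodule.span K (Set.range A.row) = ⊤ := by
    apply Submodule.eq_top_of_finrank_eq
    rw [← rank_eq_finrank_span_row, rank, LinearMap.finrank_range_of_inj hA]
  obtain ⟨κ, a, ha, haspan, hali⟩ := exists_linearIndependent' K A.row
  have : Fintype κ := Fintype.ofInjective a ha
  have hcard : Fintype.card n = Fintype.card κ := by
    rw [linearIndependent_iff_card_eq_finrank_span.mp hali, Set.finrank, haspan, hspan,
      finrank_top, Module.finrank_fintype_fun_eq_card]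
  let e := Fintype.equivOfCardEq hcard
  refine ⟨a ∘ e, ha.comp e.injective, ?_⟩
  exact ((isUnit_iff_isUnit_det _).mp
    (linearIndependent_rows_iff_isUnit.mp (hali.comp e e.injective))).ne_zero

theorem exists_injective_det_submatrix_ne_zero_iff [Fintype m] (A : Matrix m n K) :
    (∃ rows : n → m, Function.Injective rows ∧ (A.submatrix rows id).det ≠ 0) ↔
      Function.Injective A.mulVec :=
  ⟨fun ⟨_, _, h⟩ => mulVec_injective_of_det_submatrix_ne_zero h,
    exists_injective_det_submatrix_ne_zero⟩

end Matrix

theorem IsCompact.exists_pos_forall_norm_le_mul_norm_apply {X E F : Type*} [TopologicalSpace X]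
    [NormedAddCommGroup E] [NormedSpace ℝ E] [ProperSpace E] [NormedAddCommGroup F]
    [NormedSpace ℝ F] {K : Set X} (hK : IsCompact K) {A : X → E →L[ℝ] F}
    (hA : ContinuousOn A K) (hinj : ∀ x ∈ K, Function.Injective (A x)) :
    ∃ C > 0, ∀ x ∈ K, ∀ v, ‖v‖ ≤ C * ‖A x v‖ := by
  have hcont : ContinuousOn (fun p : X × E => ‖A p.1 p.2‖) (K ×ˢ Metric.sphere 0 1) :=
    ((hA.comp continuousOn_fst fun _ hp => hp.1).clm_apply continuousOn_snd).norm
  obtain ⟨b, hb, hbA⟩ := (hK.prod (isCompact_sphere 0 1)).exists_forall_le' hcont (a := 0)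
    fun p hp => norm_pos_iff.mpr <| (map_ne_zero_iff _ (hinj p.1 hp.1)).mpr <|
      ne_zero_of_mem_sphere one_ne_zero ⟨p.2, hp.2⟩
  refine ⟨b⁻¹, inv_pos.mpr hb, fun x hx v => ?_⟩
  rcases eq_or_ne v 0 with rfl | hv
  · simp
  have hbv := hbA (x, ‖v‖⁻¹ • v) ⟨hx, by simp [norm_smul, hv]⟩
  rw [map_smul, norm_smul, norm_inv, norm_norm, inv_mul_eq_div,
    le_div_iff₀ (norm_pos_iff.mpr hv)] at hbv
  rw [inv_mul_eq_div, le_div_iff₀ hb]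
  linarith

theorem MeasureTheory.Measure.restrict_pos_of_mem_nhdsWithin {X : Type*} [TopologicalSpace X]
    [MeasurableSpace X] [OpensMeasurableSpace X] (μ : Measure X) [μ.IsOpenPosMeasure]
    {s t : Set X} {x : X} (hs : s ⊆ closure (interior s)) (hx : x ∈ s) (ht : t ∈ 𝓝[s] x) :
    0 < μ.restrict s t := by
  obtain ⟨U, hU, hxU, hUt⟩ := mem_nhdsWithin.mp ht
  have hV : IsOpen (U ∩ interior s) := hU.inter isOpen_interior
  calc 0 < μ (U ∩ interior s) := hV.measure_pos μ (mem_closure_iff.mp (hs hx) U hU hxU)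
    _ = μ.restrict s (U ∩ interior s) := by
      rw [Measure.restrict_apply hV.measurableSet,
        Set.inter_eq_left.mpr (Set.inter_subset_right.trans interior_subset)]
    _ ≤ μ.restrict s t := measure_mono fun y hy => hUt ⟨hy.1, interior_subset hy.2⟩

section MultiplicationOperator

variable {X E F : Type*} [MeasurableSpace X] [NormedAddCommGroup E] [NormedSpace ℝ E]
  [NormedAddCommGroup F] [NormedSpace ℝ F] {p : ℝ≥0∞} {μ : Measure X}

def IsMultiplicationOperator (T : Lp E p μ → Lp F p μ) (A : X → E →L[ℝ] F) : Prop :=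
  ∀ f, T f =ᵐ[μ] fun x => A x (f x)

namespace IsMultiplicationOperator

variable {T : Lp E p μ → Lp F p μ} {A : X → E →L[ℝ] F}

theorem norm_le_mul_norm (hT : IsMultiplicationOperator T A) {C : ℝ}
    (hA : ∀ᵐ x ∂μ, ∀ v, ‖v‖ ≤ C * ‖A x v‖) (f : Lp E p μ) : ‖f‖ ≤ C * ‖T f‖ :=
  Lp.norm_le_mul_norm_of_ae_le_mul <| by
    filter_upwards [hT f, hA] with x hTx hAx
    rw [hTx]
    exact hAx _

theorem norm_le_mul_mul_norm_of_forall_mem [Fact (1 ≤ p)] (hT : IsMultiplicationOperator T A)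
    {C ε : ℝ} (hC : 0 ≤ C) (hest : ∀ f, ‖f‖ ≤ C * ‖T f‖) {s : Set X} (hs : MeasurableSet s)
    (hμs : μ s ≠ ∞) (hμs₀ : μ s ≠ 0) {v : E} (hv : ∀ x ∈ s, ‖A x v‖ ≤ ε * ‖v‖) :
    ‖v‖ ≤ C * ε * ‖v‖ := by
  set f := indicatorConstLp p hs hμs v
  have hTf : ‖T f‖ ≤ ε * ‖f‖ := Lp.norm_le_mul_norm_of_ae_le_mul <| by
    filter_upwards [hT f, indicatorConstLp_coeFn (p := p) (hs := hs) (hμs := hμs) (c := v)]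
      with x hTx hfx
    rw [hTx, hfx]
    by_cases hx : x ∈ s
    · simpa [hx] using hv x hx
    · simp [hx]
  have hf : ‖f‖ = ‖v‖ * μ.real s ^ (1 / p.toReal) :=
    norm_indicatorConstLp' (zero_lt_one.trans_le Fact.out).ne' hμs₀
  have hpos : 0 < μ.real s ^ (1 / p.toReal) :=
    Real.rpow_pos_of_pos (ENNReal.toReal_pos hμs₀ hμs) _
  have hfTf := (hest f).trans (mul_le_mul_of_nonneg_left hTf hC)
  rw [hf] at hfTf
  exact le_of_mul_le_mul_right (by linarith) hpos

theorem injective_of_norm_le_mul_norm [Fact (1 ≤ p)] [TopologicalSpace X]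
    [OpensMeasurableSpace X] [IsFiniteMeasure μ] (hT : IsMultiplicationOperator T A) {C : ℝ}
    (hC : 0 ≤ C) (hest : ∀ f, ‖f‖ ≤ C * ‖T f‖) {K : Set X} (hK : IsClosed K) (hA : ContinuousOn A K)
    {x₀ : X} (hx₀ : x₀ ∈ K) (hμ : ∀ t ∈ 𝓝[K] x₀, 0 < μ t) : Function.Injective (A x₀) := by
  refine (injective_iff_map_eq_zero (A x₀)).mpr fun v hv => ?_
  by_contra hv₀
  have hvpos : 0 < ‖v‖ := norm_pos_iff.mpr hv₀
  set ε := (C + 1)⁻¹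
  have hCε : C * ε < 1 := by
    rw [← div_eq_mul_inv, div_lt_one (by linarith)]
    linarith
  have hAv : ContinuousOn (fun x => A x v) K := hA.clm_apply continuousOn_const
  set s := K ∩ (fun x => A x v) ⁻¹' Metric.closedBall 0 (ε * ‖v‖)
  have hs : IsClosed s := hAv.preimage_isClosed_of_isClosed hK Metric.isClosed_closedBall
  have hsx₀ : s ∈ 𝓝[K] x₀ := Filter.inter_mem self_mem_nhdsWithin <| hAv x₀ hx₀ <| by
    show Metric.closedBall 0 _ ∈ 𝓝 (A x₀ v)
    rw [hv]
    exact Metric.closedBall_mem_nhds _ (by positivity)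
  have hle := hT.norm_le_mul_mul_norm_of_forall_mem hC hest hs.measurableSet
    (measure_ne_top μ s) (hμ s hsx₀).ne' fun x hx => mem_closedBall_zero_iff.mp hx.2
  nlinarith

end IsMultiplicationOperator

end MultiplicationOperator

theorem stmt5_general (k n : ℕ) (M : ℝ → Matrix (Fin n) (Fin k) ℝ)
    (hM : ContinuousOn M (Set.Icc 0 1))
    (T : Lp (E := EuclideanSpace ℝ (Fin k)) 2 (volume.restrict (Set.Icc (0:ℝ) 1)) →L[ℝ]
         Lp (E := EuclideanSpace ℝ (Fin n)) 2 (volume.restrict (Set.Icc (0:ℝ) 1)))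
    (hT : ∀ f, (T f : ℝ → EuclideanSpace ℝ (Fin n))
        =ᵐ[volume.restrict (Set.Icc (0:ℝ) 1)]
          fun x => (WithLp.toLp 2 ((M x).mulVec (f x)) : EuclideanSpace ℝ (Fin n))) :
    (∃ C > (0:ℝ), ∀ f, ‖f‖ ≤ C * ‖T f‖) ↔
      ∀ x ∈ Set.Icc (0:ℝ) 1, ∃ rows : Fin k → Fin n,
        Function.Injective rows ∧ ((M x).submatrix rows id).det ≠ 0 := by
  let A : ℝ → EuclideanSpace ℝ (Fin k) →L[ℝ] EuclideanSpace ℝ (Fin n) :=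
    fun x => LinearMap.toContinuousLinearMap (toEuclideanLin (M x))
  have hTA : IsMultiplicationOperator T A := hT
  have hA : ContinuousOn A (Set.Icc 0 1) :=
    (LinearMap.toContinuousLinearMap.toLinearMap ∘ₗ toEuclideanLin.toLinearMap :
      Matrix (Fin n) (Fin k) ℝ →ₗ[ℝ] _).continuous_of_finiteDimensional.comp_continuousOn hM
  have hinj (x : ℝ) : Function.Injective (A x) ↔ Function.Injective (M x).mulVec :=
    show Function.Injective ((WithLp.equiv 2 _).symm ∘ (M x).mulVec ∘ WithLp.equiv 2 _) ↔ _ by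
      rw [Equiv.comp_injective, Equiv.injective_comp]
  simp only [exists_injective_det_submatrix_ne_zero_iff, ← hinj]
  constructor
  · rintro ⟨C, hC, hest⟩ x hx
    exact hTA.injective_of_norm_le_mul_norm hC.le hest isClosed_Icc hA hx fun t ht =>
      volume.restrict_pos_of_mem_nhdsWithin (closure_interior_Icc zero_ne_one).symm.subset hx ht
  · intro h
    obtain ⟨C, hC, hCA⟩ := isCompact_Icc.exists_pos_forall_norm_le_mul_norm_apply hA h
    exact ⟨C, hC, hTA.norm_le_mul_norm ((ae_restrict_mem measurableSet_Icc).mono hCA)⟩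

/-- For `1 ≤ k < n` and a continuous `M : [0,1] → M_{n×k}(ℝ)` with associated
multiplication operator `𝕄 : L²((0,1);ℝᵏ) → L²((0,1);ℝⁿ)`, the coercivity estimate
`‖h‖ ≤ C‖𝕄h‖` (for some `C > 0`) holds iff for every `x ∈ [0,1]` some `k×k` submatrix of
`M(x)` obtained by selecting `k` rows has nonzero determinant. -/
theorem stmt5 (k n : ℕ) (hk : 1 ≤ k) (hkn : k < n) (M : ℝ → Matrix (Fin n) (Fin k) ℝ)
    (hM : ContinuousOn M (Set.Icc 0 1))
    (T : Lp (E := EuclideanSpace ℝ (Fin k)) 2 (volume.restrict (Set.Icc (0:ℝ) 1)) →L[ℝ]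
         Lp (E := EuclideanSpace ℝ (Fin n)) 2 (volume.restrict (Set.Icc (0:ℝ) 1)))
    (hT : ∀ f, (T f : ℝ → EuclideanSpace ℝ (Fin n))
        =ᵐ[volume.restrict (Set.Icc (0:ℝ) 1)]
          fun x => (WithLp.toLp 2 ((M x).mulVec (f x)) : EuclideanSpace ℝ (Fin n))) :
    (∃ C > (0:ℝ), ∀ f, ‖f‖ ≤ C * ‖T f‖) ↔
      ∀ x ∈ Set.Icc (0:ℝ) 1, ∃ rows : Fin k → Fin n,
        Function.Injective rows ∧ ((M x).submatrix rows id).det ≠ 0 :=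
  stmt5_general k n M hM T hT
end
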